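/- Let (U2,X1,X2) be finite-valued random variables with joint distribution p(u2,x1,x2) = p(x1) p(u2,x2) (X1 independent of (U2,X2)), and let (Y1,Y2) be the output of a DMZIC with weak interference with input (X1,X2), where U2 - (X1,X2) - (Y1,Y2) is a Markov chain. Then I(U2,X1;Y1) - I(U2;Y2) <= I(X1;Y1|U2). -/

import Mathlib

open scoped BigOperators

noncomputable section

namespace IT

/-- A probability mass function on a finite type. -/
def IsPMF {α : Type*} [Fintype α] (p : α → ℝ) : Prop :=
  (∀ a, 0 ≤ p a) ∧ ∑ a, p a = 1

/-- The distribution (pushforward) of a random variable `X` under the pmf `μ`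
on the sample space `Ω`. -/
def distOf {Ω α : Type*} [Fintype Ω] [DecidableEq α] (μ : Ω → ℝ) (X : Ω → α) : α → ℝ :=
  fun a => ∑ ω, if X ω = a then μ ω else 0

/-- Shannon entropy (base-2 logarithms) of a pmf on a finite type.
(Recall `Real.logb 2 0 = 0`, so the `0 log 0 = 0` convention is automatic.) -/
def ent {α : Type*} [Fintype α] (p : α → ℝ) : ℝ := -∑ a, p a * Real.logb 2 (p a)

/-- Entropy `H(X)` of a finite-valued random variable `X` on `(Ω, μ)`. -/
def H {Ω α : Type*} [Fintype Ω] [Fintype α] [DecidableEq α] (μ : Ω → ℝ) (X : Ω → α) : ℝ :=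
  ent (distOf μ X)

/-- Mutual information `I(X;Y)`. -/
def MI {Ω α β : Type*} [Fintype Ω] [Fintype α] [DecidableEq α] [Fintype β] [DecidableEq β]
    (μ : Ω → ℝ) (X : Ω → α) (Y : Ω → β) : ℝ :=
  H μ X + H μ Y - H μ (fun ω => (X ω, Y ω))

/-- Conditional mutual information `I(X;Y|Z)`. -/
def CMI {Ω α β γ : Type*} [Fintype Ω] [Fintype α] [DecidableEq α] [Fintype β] [DecidableEq β]
    [Fintype γ] [DecidableEq γ] (μ : Ω → ℝ) (X : Ω → α) (Y : Ω → β) (Z : Ω → γ) : ℝ :=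
  H μ (fun ω => (X ω, Z ω)) + H μ (fun ω => (Y ω, Z ω))
    - H μ (fun ω => (X ω, Y ω, Z ω)) - H μ Z

/-- `B` is conditionally independent of `A` given `C` (a Markov chain `A - C - B`). -/
def CondIndep {Ω α β γ : Type*} [Fintype Ω] [DecidableEq α] [DecidableEq β] [DecidableEq γ]
    (μ : Ω → ℝ) (A : Ω → α) (B : Ω → β) (C : Ω → γ) : Prop :=
  ∀ a b c,
    distOf μ (fun ω => (A ω, B ω, C ω)) (a, b, c) * distOf μ C c =
      distOf μ (fun ω => (A ω, C ω)) (a, c) * distOf μ (fun ω => (B ω, C ω)) (b, c)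

variable {A1 A2 B1 B2 : Type*}

/-- A discrete memoryless interference channel with input alphabets `A1, A2` and
output alphabets `B1, B2`: every pair of inputs yields a pmf on output pairs. -/
def IsChannel [Fintype B1] [Fintype B2] (W : A1 → A2 → B1 × B2 → ℝ) : Prop :=
  ∀ x1 x2, IsPMF (W x1 x2)

/-- DMZIC with weak interference: the transition probability factorizes as
`p(y1,y2|x1,x2) = p(y2|x2) q(y1|x1,y2)`, i.e. one-sided interference together with
the Markov chain `X2 - (X1,Y2) - Y1`. -/
def WeakZ [Fintype B1] [Fintype B2] (W : A1 → A2 → B1 × B2 → ℝ) : Prop :=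
  ∃ (p2 : A2 → B2 → ℝ) (q : A1 → B2 → B1 → ℝ),
    (∀ x2, IsPMF (p2 x2)) ∧ (∀ x1 y2, IsPMF (q x1 y2)) ∧
      ∀ x1 x2 y1 y2, W x1 x2 (y1, y2) = p2 x2 y2 * q x1 y2 y1

/-- Factorization `p(y1,y2|x1,x2) = p(y2|x1,x2) q(y1|x1,y2)`, i.e. the Markov chain
`X2 - (X1,Y2) - Y1`. -/
def ChainX2X1Y2Y1 [Fintype B1] [Fintype B2] (W : A1 → A2 → B1 × B2 → ℝ) : Prop :=
  ∃ (pa : A1 → A2 → B2 → ℝ) (q : A1 → B2 → B1 → ℝ),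
    (∀ x1 x2, IsPMF (pa x1 x2)) ∧ (∀ x1 y2, IsPMF (q x1 y2)) ∧
      ∀ x1 x2 y1 y2, W x1 x2 (y1, y2) = pa x1 x2 y2 * q x1 y2 y1

/-- The `n`-fold memoryless extension of the channel `W`. -/
def nFold (W : A1 → A2 → B1 × B2 → ℝ) (n : ℕ) (a : Fin n → A1) (b : Fin n → A2)
    (y : (Fin n → B1) × (Fin n → B2)) : ℝ :=
  ∏ i, W (a i) (b i) (y.1 i, y.2 i)

/-- An `(n, M1, M2)` code for the interference channel. -/
structure Code (A1 A2 B1 B2 : Type*) (n M1 M2 : ℕ) where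
  enc1 : Fin M1 → Fin n → A1
  enc2 : Fin M2 → Fin n → A2
  dec1 : (Fin n → B1) → Fin M1
  dec2 : (Fin n → B2) → Fin M2

/-- Average probability of error at receiver 1 (messages uniform and independent). -/
def err1 [Fintype B1] [Fintype B2] (W : A1 → A2 → B1 × B2 → ℝ) {n M1 M2 : ℕ}
    (c : Code A1 A2 B1 B2 n M1 M2) : ℝ :=
  ((M1 : ℝ) * (M2 : ℝ))⁻¹ *
    ∑ w1 : Fin M1, ∑ w2 : Fin M2, ∑ y : (Fin n → B1) × (Fin n → B2),
      if c.dec1 y.1 ≠ w1 then nFold W n (c.enc1 w1) (c.enc2 w2) y else 0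

/-- Average probability of error at receiver 2 (messages uniform and independent). -/
def err2 [Fintype B1] [Fintype B2] (W : A1 → A2 → B1 × B2 → ℝ) {n M1 M2 : ℕ}
    (c : Code A1 A2 B1 B2 n M1 M2) : ℝ :=
  ((M1 : ℝ) * (M2 : ℝ))⁻¹ *
    ∑ w1 : Fin M1, ∑ w2 : Fin M2, ∑ y : (Fin n → B1) × (Fin n → B2),
      if c.dec2 y.2 ≠ w2 then nFold W n (c.enc1 w1) (c.enc2 w2) y else 0

/-- A (nonnegative) rate pair `(R1, R2)` is achievable if there are codes of blocklength `n`,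
with at least `2 ^ (n R1)` and `2 ^ (n R2)` messages, whose average error probabilities at
the two receivers can be made arbitrarily small. -/
def Achievable [Fintype B1] [Fintype B2] (W : A1 → A2 → B1 × B2 → ℝ) (R1 R2 : ℝ) : Prop :=
  0 ≤ R1 ∧ 0 ≤ R2 ∧ ∀ ε : ℝ, 0 < ε →
    ∃ (n M1 M2 : ℕ) (c : Code A1 A2 B1 B2 n M1 M2), 0 < n ∧
      (2 : ℝ) ^ ((n : ℝ) * R1) ≤ (M1 : ℝ) ∧ (2 : ℝ) ^ ((n : ℝ) * R2) ≤ (M2 : ℝ) ∧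
      err1 W c ≤ ε ∧ err2 W c ≤ ε

/-- The sum-rate capacity: the supremum of `R1 + R2` over achievable rate pairs. -/
def sumCapacity [Fintype B1] [Fintype B2] (W : A1 → A2 → B1 × B2 → ℝ) : ℝ :=
  sSup {r : ℝ | ∃ R1 R2 : ℝ, Achievable W R1 R2 ∧ r = R1 + R2}

/-- The capacity region: the closure of the set of achievable rate pairs. -/
def capacityRegion [Fintype B1] [Fintype B2] (W : A1 → A2 → B1 × B2 → ℝ) : Set (ℝ × ℝ) :=
  closure {p : ℝ × ℝ | Achievable W p.1 p.2}

/-- The joint pmf of `(X1, X2, Y1, Y2)` when the product input `p1 × p2` is fed to `W`. -/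
def jointOf (W : A1 → A2 → B1 × B2 → ℝ) (p1 : A1 → ℝ) (p2 : A2 → ℝ) :
    A1 × A2 × B1 × B2 → ℝ :=
  fun z => p1 z.1 * p2 z.2.1 * W z.1 z.2.1 (z.2.2.1, z.2.2.2)

/-- Coordinate projections on `A1 × A2 × B1 × B2`. -/
def pX1 : A1 × A2 × B1 × B2 → A1 := fun z => z.1
def pX2 : A1 × A2 × B1 × B2 → A2 := fun z => z.2.1
def pY1 : A1 × A2 × B1 × B2 → B1 := fun z => z.2.2.1
def pY2 : A1 × A2 × B1 × B2 → B2 := fun z => z.2.2.2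

/-- The binary entropy function (base-2 logarithms). -/
def h2 (t : ℝ) : ℝ := -(t * Real.logb 2 t) - (1 - t) * Real.logb 2 (1 - t)

end IT

/-
By the chain rule `I(U,X1;Y1) = I(U;Y1) + I(X1;Y1|U)`, it suffices that `I(U;Y1) ≤ I(U;Y2)`.
Weak interference makes `p(u,y1,y2) = f(u,y2) g(y1,y2)`, i.e. `U - Y2 - Y1` is a Markov chain, and
the inequality is data processing: `I(U;Y1|Y2) = 0` while `I(U;Y2|Y1) ≥ 0`. Both come from writing
`I(X;Y|Z)` as the relative entropy of `p(x,y,z)` to `p(x|z) p(y|z) p(z)` and applying Gibbs'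
inequality.
-/

namespace IT

open Real Function

theorem mul_log_sub_mul_log_le {x y : ℝ} (hx : 0 ≤ x) (hy : 0 ≤ y) (hxy : 0 < x → 0 < y) :
    x * log y - x * log x ≤ y - x := by
  rcases hx.eq_or_lt with rfl | hx
  · simpa using hy
  have hy := hxy hx
  calc x * log y - x * log x = x * log (y / x) := by rw [log_div hy.ne' hx.ne']; ring
    _ ≤ x * (y / x - 1) := mul_le_mul_of_nonneg_left (log_le_sub_one_of_pos (by positivity)) hx.le
    _ = y - x := by field_simp

theorem sum_mul_logb_le_sum_mul_logb {ι : Type*} [Fintype ι] {b : ℝ} (hb : 1 < b)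
    {p q : ι → ℝ} (hp : ∀ i, 0 ≤ p i) (hq : ∀ i, 0 ≤ q i) (hpq : ∀ i, 0 < p i → 0 < q i)
    (hsum : ∑ i, q i ≤ ∑ i, p i) :
    ∑ i, p i * logb b (q i) ≤ ∑ i, p i * logb b (p i) := by
  simp only [logb, mul_div_assoc', ← Finset.sum_div]
  rw [div_le_div_iff_of_pos_right (log_pos hb), ← sub_nonpos, ← Finset.sum_sub_distrib]
  calc _ ≤ ∑ i, (q i - p i) :=
        Finset.sum_le_sum fun i _ => mul_log_sub_mul_log_le (hp i) (hq i) (hpq i)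
    _ ≤ 0 := by rw [Finset.sum_sub_distrib]; linarith

section Distributions

variable {Ω α β γ : Type*} [Fintype Ω] [DecidableEq α] [DecidableEq β] [DecidableEq γ]
  (μ : Ω → ℝ) (X : Ω → α) (Y : Ω → β) (Z : Ω → γ)

theorem distOf_nonneg (hμ : ∀ ω, 0 ≤ μ ω) (a : α) : 0 ≤ distOf μ X a :=
  Finset.sum_nonneg fun ω _ => ite_nonneg (hμ ω) le_rfl

theorem distOf_le_distOf_comp (hμ : ∀ ω, 0 ≤ μ ω) (f : α → β) (a : α) :
    distOf μ X a ≤ distOf μ (fun ω => f (X ω)) (f a) :=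
  Finset.sum_le_sum fun ω _ => by split_ifs <;> simp_all

theorem distOf_comp_of_injective {f : α → β} (hf : Injective f) (a : α) :
    distOf μ (fun ω => f (X ω)) (f a) = distOf μ X a := by
  simp only [distOf, hf.eq_iff]

theorem sum_distOf_mul [Fintype α] (F : α → ℝ) :
    ∑ a, distOf μ X a * F a = ∑ ω, μ ω * F (X ω) := by
  simp only [distOf, Finset.sum_mul, ite_mul, zero_mul]
  rw [Finset.sum_comm]
  simp

theorem sum_distOf [Fintype α] : ∑ a, distOf μ X a = ∑ ω, μ ω := by
  simpa using sum_distOf_mul μ X 1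

theorem sum_distOf_mul_comp [Fintype α] [Fintype β] (f : α → β) (F : β → ℝ) :
    ∑ a, distOf μ X a * F (f a) = ∑ b, distOf μ (fun ω => f (X ω)) b * F b := by
  rw [sum_distOf_mul, sum_distOf_mul]

theorem sum_distOf_pair_fst [Fintype α] (b : β) :
    ∑ a, distOf μ (fun ω => (X ω, Y ω)) (a, b) = distOf μ Y b := by
  simp only [distOf, Prod.mk.injEq, ite_and]
  rw [Finset.sum_comm]
  simp

theorem sum_distOf_triple_mid [Fintype β] (a : α) (c : γ) :
    ∑ b, distOf μ (fun ω => (X ω, Y ω, Z ω)) (a, b, c) = distOf μ (fun ω => (X ω, Z ω)) (a, c) := by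
  simp only [distOf, Prod.mk.injEq, and_left_comm (a := X _ = a), ite_and]
  rw [Finset.sum_comm]
  simp

theorem condIndep_of_factorization [Fintype α] [Fintype β] (f : α → γ → ℝ) (g : β → γ → ℝ)
    (hfg : ∀ a b c, distOf μ (fun ω => (X ω, Y ω, Z ω)) (a, b, c) = f a c * g b c) :
    CondIndep μ X Y Z := by
  intro a b c
  have hXZ : distOf μ (fun ω => (X ω, Z ω)) (a, c) = f a c * ∑ b, g b c := by
    rw [← sum_distOf_triple_mid μ X Y, Finset.mul_sum]; simp only [hfg]
  have hYZ : ∀ b, distOf μ (fun ω => (Y ω, Z ω)) (b, c) = (∑ a, f a c) * g b c := by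
    intro b; rw [← sum_distOf_pair_fst μ X, Finset.sum_mul]; simp only [hfg]
  have hZ : distOf μ Z c = (∑ a, f a c) * ∑ b, g b c := by
    rw [← sum_distOf_pair_fst μ Y, Finset.mul_sum]; simp only [hYZ]
  rw [hfg, hXZ, hYZ, hZ]
  ring

/-- The law `p(x|z) p(y|z) p(z)` under which `X` and `Y` are conditionally independent given `Z`;
it vanishes where `p(z) = 0`. -/
def condProd (t : α × β × γ) : ℝ :=
  distOf μ (fun ω => (X ω, Z ω)) (t.1, t.2.2) * distOf μ (fun ω => (Y ω, Z ω)) (t.2.1, t.2.2)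
    / distOf μ Z t.2.2

theorem distOf_marginals_pos (hμ : ∀ ω, 0 ≤ μ ω) {a : α} {b : β} {c : γ}
    (h : 0 < distOf μ (fun ω => (X ω, Y ω, Z ω)) (a, b, c)) :
    0 < distOf μ (fun ω => (X ω, Z ω)) (a, c) ∧ 0 < distOf μ (fun ω => (Y ω, Z ω)) (b, c) ∧
      0 < distOf μ Z c :=
  ⟨h.trans_le (distOf_le_distOf_comp μ _ hμ (fun t : α × β × γ => (t.1, t.2.2)) _),
    h.trans_le (distOf_le_distOf_comp μ _ hμ (fun t : α × β × γ => t.2) _),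
    h.trans_le (distOf_le_distOf_comp μ _ hμ (fun t : α × β × γ => t.2.2) _)⟩

theorem sum_condProd [Fintype α] [Fintype β] [Fintype γ] :
    ∑ t, condProd μ X Y Z t = ∑ ω, μ ω := by
  calc ∑ t, condProd μ X Y Z t
      = ∑ c, (∑ a, distOf μ (fun ω => (X ω, Z ω)) (a, c)) *
          (∑ b, distOf μ (fun ω => (Y ω, Z ω)) (b, c)) / distOf μ Z c := by
        simp only [condProd, Fintype.sum_prod_type, Finset.sum_mul_sum, Finset.sum_div]
        exact (Finset.sum_congr rfl fun _ _ => Finset.sum_comm).trans Finset.sum_comm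
    _ = ∑ c, distOf μ Z c := by simp only [sum_distOf_pair_fst, mul_self_div_self]
    _ = ∑ ω, μ ω := sum_distOf μ Z

theorem H_comp_eq_neg_sum [Fintype α] [Fintype β] (f : α → β) :
    H μ (fun ω => f (X ω)) =
      -∑ a, distOf μ X a * logb 2 (distOf μ (fun ω => f (X ω)) (f a)) := by
  rw [sum_distOf_mul_comp μ X f (fun b => logb 2 (distOf μ (fun ω => f (X ω)) b))]
  rfl

theorem H_comp_of_injective [Fintype α] [Fintype β] {f : α → β} (hf : Injective f) :
    H μ (fun ω => f (X ω)) = H μ X := by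
  simp only [H_comp_eq_neg_sum, distOf_comp_of_injective μ X hf]
  rfl

theorem CMI_eq_sum_mul_logb_sub [Fintype α] [Fintype β] [Fintype γ] (hμ : ∀ ω, 0 ≤ μ ω) :
    CMI μ X Y Z =
      ∑ t, distOf μ (fun ω => (X ω, Y ω, Z ω)) t * logb 2 (distOf μ (fun ω => (X ω, Y ω, Z ω)) t)
        - ∑ t, distOf μ (fun ω => (X ω, Y ω, Z ω)) t * logb 2 (condProd μ X Y Z t) := by
  set P := distOf μ (fun ω => (X ω, Y ω, Z ω))
  have hXZ : H μ (fun ω => (X ω, Z ω)) =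
      -∑ t, P t * logb 2 (distOf μ (fun ω => (X ω, Z ω)) (t.1, t.2.2)) :=
    H_comp_eq_neg_sum μ (fun ω => (X ω, Y ω, Z ω)) (fun t : α × β × γ => (t.1, t.2.2))
  have hYZ : H μ (fun ω => (Y ω, Z ω)) =
      -∑ t, P t * logb 2 (distOf μ (fun ω => (Y ω, Z ω)) t.2) :=
    H_comp_eq_neg_sum μ (fun ω => (X ω, Y ω, Z ω)) (fun t : α × β × γ => t.2)
  have hZ : H μ Z = -∑ t, P t * logb 2 (distOf μ Z t.2.2) :=
    H_comp_eq_neg_sum μ (fun ω => (X ω, Y ω, Z ω)) (fun t : α × β × γ => t.2.2)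
  have hlog : ∀ t, P t * logb 2 (condProd μ X Y Z t) =
      P t * logb 2 (distOf μ (fun ω => (X ω, Z ω)) (t.1, t.2.2))
        + P t * logb 2 (distOf μ (fun ω => (Y ω, Z ω)) t.2) - P t * logb 2 (distOf μ Z t.2.2) := by
    rintro ⟨a, b, c⟩
    rcases (distOf_nonneg μ (fun ω => (X ω, Y ω, Z ω)) hμ (a, b, c)).eq_or_lt with h0 | hpos
    · simp [P, ← h0]
    obtain ⟨hXZ, hYZ, hZ⟩ := distOf_marginals_pos μ X Y Z hμ hpos
    rw [condProd, logb_div (by positivity) hZ.ne', logb_mul hXZ.ne' hYZ.ne']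
    ring
  rw [CMI, hXZ, hYZ, hZ]
  simp only [hlog, Finset.sum_add_distrib, Finset.sum_sub_distrib]
  unfold H ent
  ring

theorem CMI_nonneg [Fintype α] [Fintype β] [Fintype γ] (hμ : ∀ ω, 0 ≤ μ ω) :
    0 ≤ CMI μ X Y Z := by
  rw [CMI_eq_sum_mul_logb_sub μ X Y Z hμ, sub_nonneg]
  refine sum_mul_logb_le_sum_mul_logb one_lt_two (distOf_nonneg μ _ hμ) (fun t => ?_)
    (fun t ht => ?_) (by rw [sum_condProd, sum_distOf])
  · exact div_nonneg (mul_nonneg (distOf_nonneg μ _ hμ _) (distOf_nonneg μ _ hμ _))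
      (distOf_nonneg μ _ hμ _)
  · obtain ⟨hXZ, hYZ, hZ⟩ := distOf_marginals_pos μ X Y Z hμ ht
    exact div_pos (mul_pos hXZ hYZ) hZ

theorem CMI_eq_zero_of_condIndep [Fintype α] [Fintype β] [Fintype γ] (hμ : ∀ ω, 0 ≤ μ ω)
    (h : CondIndep μ X Y Z) : CMI μ X Y Z = 0 := by
  rw [CMI_eq_sum_mul_logb_sub μ X Y Z hμ, sub_eq_zero]
  refine Finset.sum_congr rfl fun ⟨a, b, c⟩ _ => ?_
  rcases (distOf_nonneg μ (fun ω => (X ω, Y ω, Z ω)) hμ (a, b, c)).eq_or_lt with h0 | hpos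
  · simp [← h0]
  obtain ⟨-, -, hZ⟩ := distOf_marginals_pos μ X Y Z hμ hpos
  rw [condProd, ← h a b c, mul_div_cancel_right₀ _ hZ.ne']

theorem MI_le_MI_of_condIndep [Fintype α] [Fintype β] [Fintype γ] (hμ : ∀ ω, 0 ≤ μ ω)
    (h : CondIndep μ X Y Z) : MI μ X Y ≤ MI μ X Z := by
  have hXYZ := CMI_eq_zero_of_condIndep μ X Y Z hμ h
  have hXZY := CMI_nonneg μ X Z Y hμ
  have hswap : H μ (fun ω => (Z ω, Y ω)) = H μ (fun ω => (Y ω, Z ω)) :=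
    H_comp_of_injective μ (fun ω => (Y ω, Z ω)) (f := Prod.swap) Prod.swap_injective
  have hperm : H μ (fun ω => (X ω, Z ω, Y ω)) = H μ (fun ω => (X ω, Y ω, Z ω)) :=
    H_comp_of_injective μ (fun ω => (X ω, Y ω, Z ω)) (f := Prod.map id Prod.swap)
      (injective_id.prodMap Prod.swap_injective)
  simp only [MI, CMI] at hXYZ hXZY ⊢
  linarith

theorem MI_pair_eq_MI_add_CMI [Fintype α] [Fintype β] [Fintype γ] :
    MI μ (fun ω => (X ω, Z ω)) Y = MI μ X Y + CMI μ Z Y X := by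
  have hswapXY : H μ (fun ω => (Y ω, X ω)) = H μ (fun ω => (X ω, Y ω)) :=
    H_comp_of_injective μ (fun ω => (X ω, Y ω)) (f := Prod.swap) Prod.swap_injective
  have hswapXZ : H μ (fun ω => (Z ω, X ω)) = H μ (fun ω => (X ω, Z ω)) :=
    H_comp_of_injective μ (fun ω => (X ω, Z ω)) (f := Prod.swap) Prod.swap_injective
  have hperm : H μ (fun ω => (Z ω, Y ω, X ω)) = H μ (fun ω => ((X ω, Z ω), Y ω)) :=
    H_comp_of_injective μ (fun ω => ((X ω, Z ω), Y ω)) (f := fun t => (t.1.2, t.2, t.1.1))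
      fun _ _ h => by simp_all [Prod.ext_iff]
  simp only [MI, CMI]
  linarith

end Distributions

theorem weak_DMZIC_extreme_point_ineq_general {U : Type} [Fintype U] [DecidableEq U] {A1 A2 B1 B2 : Type} [Fintype A1] [DecidableEq A1] [Fintype A2] [DecidableEq A2]
    [Fintype B1] [DecidableEq B1] [Fintype B2] [DecidableEq B2]
    (W : A1 → A2 → B1 × B2 → ℝ) (hweak : WeakZ W)
    (p1 : A1 → ℝ) (pU2 : U × A2 → ℝ) (hp1 : IsPMF p1) (hpU2 : IsPMF pU2) :
    let μ : U × A1 × A2 × B1 × B2 → ℝ :=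
      fun z => p1 z.2.1 * pU2 (z.1, z.2.2.1) * W z.2.1 z.2.2.1 (z.2.2.2.1, z.2.2.2.2)
    MI μ (fun z => (z.1, z.2.1)) (fun z => z.2.2.2.1)
        - MI μ (fun z => z.1) (fun z => z.2.2.2.2)
      ≤ CMI μ (fun z => z.2.1) (fun z => z.2.2.2.1) (fun z => z.1) := by
  obtain ⟨p2, q, hp2, hq, hWpq⟩ := hweak
  intro μ
  have hμ : ∀ z, 0 ≤ μ z := fun z => by
    simp only [μ, hWpq]
    exact mul_nonneg (mul_nonneg (hp1.1 _) (hpU2.1 _)) (mul_nonneg ((hp2 _).1 _) ((hq _ _).1 _))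
  have hmarkov : CondIndep μ (fun z => z.1) (fun z => z.2.2.2.1) (fun z => z.2.2.2.2) := by
    refine condIndep_of_factorization μ _ _ _ (fun u y2 => ∑ x2, pU2 (u, x2) * p2 x2 y2)
      (fun y1 y2 => ∑ x1, p1 x1 * q x1 y2 y1) fun u y1 y2 => ?_
    simp only [μ, distOf, Prod.mk.injEq, hWpq, ite_and, Fintype.sum_prod_type,
      Finset.sum_ite_irrel, Finset.sum_ite_eq', Finset.mem_univ, ↓reduceIte, Finset.sum_const_zero,
      Finset.sum_mul_sum]
    rw [Finset.sum_comm]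
    exact Finset.sum_congr rfl fun _ _ => Finset.sum_congr rfl fun _ _ => by ring
  rw [MI_pair_eq_MI_add_CMI]
  linarith [MI_le_MI_of_condIndep μ _ _ _ hμ hmarkov]

/-- With `p(u2, x1, x2) = p(x1) p(u2, x2)` and `(Y1, Y2)` the output of a
weak-interference DMZIC with input `(X1, X2)`,
`I(U2, X1; Y1) - I(U2; Y2) ≤ I(X1; Y1 | U2)`. -/
theorem weak_DMZIC_extreme_point_ineq {U : Type} [Fintype U] [DecidableEq U] {A1 A2 B1 B2 : Type} [Fintype A1] [DecidableEq A1] [Fintype A2] [DecidableEq A2]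
    [Fintype B1] [DecidableEq B1] [Fintype B2] [DecidableEq B2]
    (W : A1 → A2 → B1 × B2 → ℝ) (hW : IsChannel W) (hweak : WeakZ W)
    (p1 : A1 → ℝ) (pU2 : U × A2 → ℝ) (hp1 : IsPMF p1) (hpU2 : IsPMF pU2) :
    let μ : U × A1 × A2 × B1 × B2 → ℝ :=
      fun z => p1 z.2.1 * pU2 (z.1, z.2.2.1) * W z.2.1 z.2.2.1 (z.2.2.2.1, z.2.2.2.2)
    MI μ (fun z => (z.1, z.2.1)) (fun z => z.2.2.2.1)
        - MI μ (fun z => z.1) (fun z => z.2.2.2.2)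
      ≤ CMI μ (fun z => z.2.1) (fun z => z.2.2.2.1) (fun z => z.1) :=
  weak_DMZIC_extreme_point_ineq_general W hweak p1 pU2 hp1 hpU2

end IT
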